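/- arXiv:1705.02065 — 4 statements merged into one kernel-verified Lean document; each statement's English description precedes it below -/
import Mathlib

section
/- For a permutation w of {1,...,n}, the number of 132-patterns equals the sum over all cells (i,j) of the Rothe diagram of w of the rank function r_w(i,j). That is, #{(i,j,k) : i<j<k, w(i)<w(k)<w(j)} = Σ_{(i,j)∈D(w)} r_w(i,j). -/
open Finset

/-- The Rothe diagram of a permutation (0-based coordinates). -/
def Rothe {n : ℕ} (w : Equiv.Perm (Fin n)) : Finset (Fin n × Fin n) :=
  Finset.univ.filter (fun p => p.2 < w p.1 ∧ p.1 < w⁻¹ p.2)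

/-- The rank function r_w(i,j) = #{k : k ≤ i and w(k) ≤ j}. -/
def rk {n : ℕ} (w : Equiv.Perm (Fin n)) (i j : Fin n) : ℕ :=
  (Finset.univ.filter (fun k => k ≤ i ∧ w k ≤ j)).card

/-- m_i(w) = #{j : j > i and w(j) < w(i)}. -/
def mrow {n : ℕ} (w : Equiv.Perm (Fin n)) (i : Fin n) : ℕ :=
  (Finset.univ.filter (fun j => i < j ∧ w j < w i)).card

/-- The set of 132-patterns of w. -/
def P132 {n : ℕ} (w : Equiv.Perm (Fin n)) : Finset (Fin n × Fin n × Fin n) :=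
  Finset.univ.filter
    (fun t => t.1 < t.2.1 ∧ t.2.1 < t.2.2 ∧ w t.1 < w t.2.2 ∧ w t.2.2 < w t.2.1)

/-!
A 132-pattern `(i, j, k)` lies over the cell `(j, w k)` of the Rothe diagram, and over a cell
`(a, b)` the patterns are exactly the `(i, a, w⁻¹ b)` with `i < a` and `w i < b`. These are
counted by `r_w(a, b)`: the boundary cases `k = a` and `w k = b` in its definition cannot occur,
since `b < w a` and `a < w⁻¹ b` on the diagram.
-/

section

variable {n : ℕ} (w : Equiv.Perm (Fin n))

theorem mem_Rothe {p : Fin n × Fin n} : p ∈ Rothe w ↔ p.2 < w p.1 ∧ p.1 < w⁻¹ p.2 := by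
  simp [Rothe]

theorem rk_eq_card_lt_of_mem_Rothe {p : Fin n × Fin n} (hp : p ∈ Rothe w) :
    rk w p.1 p.2 = #{k | k < p.1 ∧ w k < p.2} := by
  obtain ⟨hcol, hrow⟩ := (mem_Rothe w).1 hp
  unfold rk
  congr 1
  refine filter_congr fun k _ => ⟨fun ⟨hk, hwk⟩ => ⟨hk.lt_of_ne ?_, hwk.lt_of_ne ?_⟩,
    fun ⟨hk, hwk⟩ => ⟨hk.le, hwk.le⟩⟩
  · rintro rfl
    exact hcol.not_ge hwk
  · intro hwk_eq
    rw [← hwk_eq, Equiv.Perm.coe_inv, Equiv.symm_apply_apply] at hrow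
    exact hrow.not_ge hk

theorem middle_last_mem_Rothe {t : Fin n × Fin n × Fin n} (ht : t ∈ P132 w) :
    (t.2.1, w t.2.2) ∈ Rothe w := by
  simp only [P132, mem_filter, mem_univ, true_and] at ht
  simpa [mem_Rothe] using ⟨ht.2.2.2, ht.2.1⟩

theorem P132_filter_eq_image {p : Fin n × Fin n} (hp : p ∈ Rothe w) :
    {t ∈ P132 w | (t.2.1, w t.2.2) = p} =
      ({k | k < p.1 ∧ w k < p.2} : Finset (Fin n)).image fun i => (i, p.1, w⁻¹ p.2) := by
  obtain ⟨a, b⟩ := p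
  obtain ⟨hcol, hrow⟩ := (mem_Rothe w).1 hp
  ext ⟨i, j, k⟩
  simp only [P132, mem_filter, mem_univ, true_and, mem_image, Prod.mk.injEq]
  constructor
  · rintro ⟨⟨hij, -, hik, -⟩, rfl, rfl⟩
    exact ⟨i, ⟨hij, hik⟩, rfl, rfl, by simp⟩
  · rintro ⟨i, ⟨hi, hwi⟩, rfl, rfl, rfl⟩
    simp only [Equiv.Perm.coe_inv, Equiv.apply_symm_apply, and_true]
    exact ⟨hi, hrow, hwi, hcol⟩

end

/-- The number of 132-patterns of w equals the sum of the rank function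
over the cells of the Rothe diagram. -/
theorem stmt0 {n : ℕ} (w : Equiv.Perm (Fin n)) :
    (P132 w).card = ∑ p ∈ Rothe w, rk w p.1 p.2 := by
  rw [card_eq_sum_card_fiberwise fun t ht => middle_last_mem_Rothe w ht]
  refine sum_congr rfl fun p hp => ?_
  rw [P132_filter_eq_image w hp, card_image_of_injective _ fun _ _ h => congrArg Prod.fst h,
    rk_eq_card_lt_of_mem_Rothe w hp]
end

section
/- For any permutation w ∈ S_n, the map (i,j) ↦ (i, j − r_w(i,j)) is a bijection from the Rothe diagram D(w) onto the bottom pipe dream B_w := {(i,j) : 1 ≤ j ≤ m_i(w)}, where m_i(w) = #{j : j > i and w(j) < w(i)}. -/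
/-!
Row `i` of the Rothe diagram is the set of columns `j < w i` with `w⁻¹ j > i`, which `w⁻¹` maps
onto the positions counted by `m_i(w)`. For a cell `(i, j)`, split the columns `v < j` according
to whether `w⁻¹ v ≤ i`: those are exactly what `r_w(i, j)` counts (as `w⁻¹ j > i`), and the others
are cells of row `i` (as `v < j < w i`). Hence `j - r_w(i, j)` is the rank of `j` within its row,
and on each row the map is the rank map of an `m_i(w)`-element set onto `{0, …, m_i(w) - 1}`.
-/

open Finset

theorem Finset.bijOn_card_filter_lt {α : Type*} [LinearOrder α] (s : Finset α) :
    Set.BijOn (fun a => #{b ∈ s | b < a}) s (range #s) := by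
  have strictMonoOn : StrictMonoOn (fun a => #{b ∈ s | b < a}) s := fun a ha b _ hab =>
    card_lt_card <| (ssubset_iff_of_subset (monotone_filter_right s fun _ _ h => h.trans hab)).2
      ⟨a, by simpa [hab] using ha⟩
  have mapsTo : Set.MapsTo (fun a => #{b ∈ s | b < a}) s (range #s) := fun a ha =>
    mem_range.2 <| card_lt_card <| filter_ssubset.2 ⟨a, ha, lt_irrefl a⟩
  exact ⟨mapsTo, strictMonoOn.injOn,
    surjOn_of_injOn_of_card_le _ mapsTo strictMonoOn.injOn (card_range _).le⟩

theorem Set.BijOn.prodMk_fiberwise {ι α β γ : Type*} {f : ι → γ} (hf : Function.Injective f)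
    {g : ι → α → β} {s : ι → Set α} {t : ι → Set β} (h : ∀ i, Set.BijOn (g i) (s i) (t i)) :
    Set.BijOn (fun p : ι × α => (f p.1, g p.1 p.2)) {p | p.2 ∈ s p.1}
      {q | ∃ i, q.1 = f i ∧ q.2 ∈ t i} := by
  refine ⟨fun p hp => ⟨p.1, rfl, (h p.1).mapsTo hp⟩, ?_, ?_⟩
  · rintro ⟨i, a⟩ ha ⟨i', a'⟩ ha' heq
    obtain ⟨hi, hg⟩ := Prod.mk.inj heq
    obtain rfl := hf hi
    exact Prod.ext rfl ((h i).injOn ha ha' hg)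
  · rintro ⟨_, b⟩ ⟨i, rfl, hb⟩
    obtain ⟨a, ha, rfl⟩ := (h i).surjOn hb
    exact ⟨(i, a), ha, rfl⟩

section Rothe

variable {n : ℕ} (w : Equiv.Perm (Fin n))

def rotheRow (i : Fin n) : Finset (Fin n) :=
  {j | j < w i ∧ i < w⁻¹ j}

theorem coe_Rothe : (Rothe w : Set (Fin n × Fin n)) = {p | p.2 ∈ rotheRow w p.1} := by
  ext p
  simp [Rothe, rotheRow]

theorem card_rotheRow (i : Fin n) : #(rotheRow w i) = mrow w i :=
  card_equiv w.symm fun j => by simp [rotheRow, and_comm]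

theorem rk_add_card_rotheRow_lt {i j : Fin n} (hj : j ∈ rotheRow w i) :
    rk w i j + #{v ∈ rotheRow w i | v < j} = j := by
  simp only [rotheRow, mem_filter, mem_univ, true_and] at hj
  have rk_eq : rk w i j = #{v | v < j ∧ w⁻¹ v ≤ i} := by
    refine card_equiv w fun k => ?_
    simp only [mem_filter, mem_univ, true_and, Equiv.Perm.coe_inv, Equiv.symm_apply_apply]
    refine ⟨fun ⟨hk, hwk⟩ => ⟨hwk.lt_of_ne ?_, hk⟩, fun ⟨hwk, hk⟩ => ⟨hk, hwk.le⟩⟩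
    rintro rfl
    exact absurd hk (not_le.2 (by simpa using hj.2))
  have row_eq : {v ∈ rotheRow w i | v < j} = ({v | v < j ∧ ¬ w⁻¹ v ≤ i} : Finset (Fin n)) := by
    ext v
    simp only [rotheRow, mem_filter, mem_univ, true_and, not_le]
    exact ⟨fun h => ⟨h.2, h.1.2⟩, fun h => ⟨⟨h.1.trans hj.1, h.2⟩, h.1⟩⟩
  rw [rk_eq, row_eq, ← filter_filter, ← filter_filter, card_filter_add_card_filter_not,
    ← Fin.card_Iio j]
  congr 1
  ext v
  simp

end Rothe

/-- The map (i,j) ↦ (i, j − r_w(i,j)) is a bijection from the Rothe diagram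
onto the bottom pipe dream B_w = {(i,j) : j < m_i(w)} (0-based columns). -/
theorem stmt3 {n : ℕ} (w : Equiv.Perm (Fin n)) :
    Set.BijOn (fun p : Fin n × Fin n => ((p.1 : ℕ), (p.2 : ℕ) - rk w p.1 p.2))
      (↑(Rothe w))
      {q : ℕ × ℕ | ∃ i : Fin n, q.1 = (i : ℕ) ∧ q.2 < mrow w i} := by
  have rowBijOn (i : Fin n) : Set.BijOn (fun j => #{v ∈ rotheRow w i | v < j})
      (rotheRow w i) (Set.Iio (mrow w i)) := by
    simpa [card_rotheRow] using (rotheRow w i).bijOn_card_filter_lt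
  rw [coe_Rothe]
  refine (Set.BijOn.prodMk_fiberwise Fin.val_injective rowBijOn).congr fun p hp => ?_
  have rank_add := rk_add_card_rotheRow_lt w hp
  simp only [Prod.mk.injEq, true_and]
  omega
end

section
/- For any permutation w ∈ S_n and any antidiagonal index k, the number of cells of the bottom pipe dream B_w on the k-th antidiagonal equals the number of cells of the top pipe dream T_w on the k-th antidiagonal: #{(i,j) ∈ B_w : i+j−1 = k} = #{(i,j) ∈ T_w : i+j−1 = k}. -/
open Finset

section RowShape

variable {n : ℕ} (f : Fin n → ℕ)

lemma card_cells_on_antidiagonal (hf : ∀ i, f i ≤ n) (k : ℕ) :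
    #{p : Fin n × Fin n | (p.2 : ℕ) < f p.1 ∧ (p.1 : ℕ) + p.2 + 1 = k} =
      #{i : Fin n | (i : ℕ) < k ∧ k ≤ i + f i} := by
  refine card_bij' (fun p _ => p.1)
    (fun i hi => (i, ⟨k - 1 - i, by have := hf i; simp only [mem_filter] at hi; omega⟩))
    (fun p hp => ?_) (fun i hi => ?_) (fun p hp => ?_) (fun i hi => rfl)
  · simp only [mem_filter, mem_univ, true_and] at hp ⊢
    omega
  · simp only [mem_filter, mem_univ, true_and] at hi ⊢
    omega
  · simp only [mem_filter, mem_univ, true_and] at hp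
    ext
    · rfl
    · simp only
      omega

lemma card_rows_meeting_antidiagonal_add (k : ℕ) :
    #{i : Fin n | (i : ℕ) < k ∧ k ≤ i + f i} + #{i : Fin n | (i : ℕ) + f i < k} =
      #{i : Fin n | (i : ℕ) < k} := by
  rw [← card_filter_add_card_filter_not (s := {i : Fin n | (i : ℕ) < k}) (fun i => k ≤ i + f i),
    filter_filter, filter_filter]
  congr 2
  ext i
  simp only [mem_filter, mem_univ, true_and]
  omega

end RowShape

section Inversions

variable {n : ℕ} (w : Equiv.Perm (Fin n))

lemma mrow_le (i : Fin n) : mrow w i ≤ n :=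
  (card_filter_le _ _).trans (card_univ.trans (Fintype.card_fin n)).le

lemma mrow_add_card_inversions_left (i : Fin n) :
    mrow w i + #{m | m < i ∧ w m < w i} = w i := by
  rw [mrow, ← card_union_of_disjoint (disjoint_filter.2 fun m _ h h' => h.1.asymm h'.1),
    ← filter_or]
  calc #{m | (i < m ∧ w m < w i) ∨ (m < i ∧ w m < w i)}
      = #{m | w m < w i} := by
        congr 1; ext m
        simp only [mem_filter, mem_univ, true_and]
        constructor
        · rintro (h | h) <;> exact h.2
        · intro h
          rcases lt_trichotomy i m with him | rfl | hmi
          exacts [.inl ⟨him, h⟩, absurd h (lt_irrefl _), .inr ⟨hmi, h⟩]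
    _ = #(Iio (w i)) := card_equiv w (by simp)
    _ = w i := Fin.card_Iio _

lemma add_mrow_eq_add_mrow_inv (i : Fin n) :
    (i : ℕ) + mrow w i = w i + mrow w⁻¹ (w i) := by
  have hw := mrow_add_card_inversions_left w i
  have hw' := mrow_add_card_inversions_left w⁻¹ (w i)
  have hsame : #{m | m < w i ∧ w⁻¹ m < w⁻¹ (w i)} = #{m | m < i ∧ w m < w i} :=
    card_equiv w⁻¹ (by simp [and_comm])
  rw [hsame, show w⁻¹ (w i) = i from w.symm_apply_apply i] at hw'
  omega

end Inversions

/-- The antidiagonal `i + j - 1 = k` of the paper's 1-based coordinates is `i + j + 1 = k` in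
0-based ones. -/
theorem stmt6 {n : ℕ} (w : Equiv.Perm (Fin n)) (k : ℕ) :
    (Finset.univ.filter (fun p : Fin n × Fin n =>
        (p.2 : ℕ) < mrow w p.1 ∧ (p.1 : ℕ) + (p.2 : ℕ) + 1 = k)).card =
    (Finset.univ.filter (fun p : Fin n × Fin n =>
        (p.1 : ℕ) < mrow w⁻¹ p.2 ∧ (p.1 : ℕ) + (p.2 : ℕ) + 1 = k)).card := by
  have hCells : #{p : Fin n × Fin n | (p.1 : ℕ) < mrow w⁻¹ p.2 ∧ (p.1 : ℕ) + p.2 + 1 = k} =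
      #{j : Fin n | (j : ℕ) < k ∧ k ≤ j + mrow w⁻¹ j} := by
    rw [← card_cells_on_antidiagonal (mrow w⁻¹) (mrow_le w⁻¹) k]
    exact card_equiv (Equiv.prodComm _ _) (by simp [add_comm])
  have hEnded : #{i : Fin n | (i : ℕ) + mrow w i < k} = #{j : Fin n | (j : ℕ) + mrow w⁻¹ j < k} :=
    card_equiv w fun i => by rw [mem_filter, mem_filter, add_mrow_eq_add_mrow_inv]; simp
  have hRows := card_rows_meeting_antidiagonal_add (mrow w) k
  have hCols := card_rows_meeting_antidiagonal_add (mrow w⁻¹) k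
  rw [card_cells_on_antidiagonal (mrow w) (mrow_le w) k, hCells]
  omega
end

section
/- For any permutation w ∈ S_n, the number of 132-patterns of w equals the number of 132-patterns of w⁻¹ if one counts via the Rothe diagram: Σ_{(i,j)∈D(w)} r_w(i,j) = Σ_{(i,j)∈D(w⁻¹)} r_{w⁻¹}(i,j). -/
open Finset

theorem mem_Rothe_inv_swap {n : ℕ} (w : Equiv.Perm (Fin n)) (p : Fin n × Fin n) :
    p ∈ Rothe w ↔ p.swap ∈ Rothe w⁻¹ := by
  simp [Rothe, and_comm]

theorem rk_inv {n : ℕ} (w : Equiv.Perm (Fin n)) (i j : Fin n) :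
    rk w i j = rk w⁻¹ j i :=
  Finset.card_equiv w fun k => by simp [and_comm]

/-- The rank sums over the Rothe diagrams of w and w⁻¹ agree. -/
theorem stmt15 {n : ℕ} (w : Equiv.Perm (Fin n)) :
    ∑ p ∈ Rothe w, rk w p.1 p.2 = ∑ p ∈ Rothe w⁻¹, rk w⁻¹ p.1 p.2 :=
  Finset.sum_equiv (Equiv.prodComm _ _) (mem_Rothe_inv_swap w) fun p _ => rk_inv w p.1 p.2
end
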